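/- Let G' be a finite directed graph with nonnegative edge weights containing a directed path P₂ of total length 0 and a sequence P₁ of distinct vertices disjoint from P₂ equipped with a linear order ≤_{P₁}, such that no vertex of P₁ has an outgoing edge in G' and every edge of G' whose head lies on P₂ is an edge of P₂. Assume the crossing hypothesis: whenever W is a walk in G' from a vertex b of P₂ to a vertex p of P₁ and W' is a walk in G' from a vertex b' of P₂ to a vertex p' of P₁ with b' <_{P₂} b and p' <_{P₁} p, the walks W and W' share a vertex. Let β > 0, write v_f = dfirst_{G'}(v,P₁,β) when it exists, and let B be the set of maximal pairs (v, v_f), i.e., those with v_f defined and no u >_{P₂} v with u_f defined and u_f ≤_{P₁} v_f. Suppose B is nonempty, let b* be the ≤_{P₂}-greatest first coordinate of a pair in B, and let v* be the ≤_{P₁}-least second coordinate of a pair in B. Then for every vertex b of P₂ with b ≤_{P₂} b*: b_f is defined, v* ≤_{P₁} b_f, and some walk in G' from b to v* has length at most 2β. -/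

import Mathlib

/-- A walk in the directed graph with edge relation `E`: a nonempty list of vertices
starting at `u`, ending at `v`, with every consecutive pair an edge. -/
def IsWalk {V : Type*} (E : V → V → Prop) (l : List V) (u v : V) : Prop :=
  l ≠ [] ∧ l.head? = some u ∧ l.getLast? = some v ∧ l.Chain' E

/-- The length of a walk: the sum of the weights of its consecutive pairs. -/
def walkLen {V : Type*} (w : V → V → ℝ) (l : List V) : ℝ :=
  ((l.zip l.tail).map fun q => w q.1 q.2).sum

/-- `b` is `dfirst_G(v,Q,β)`: the `≤_Q`-least vertex of the ordered vertex list `q`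
reachable from `v` by a walk of length at most `β`. -/
def IsDFirst {V : Type*} [DecidableEq V] (E : V → V → Prop) (w : V → V → ℝ)
    (v : V) (q : List V) (β : ℝ) (b : V) : Prop :=
  b ∈ q ∧ (∃ l, IsWalk E l v b ∧ walkLen w l ≤ β) ∧
    ∀ c ∈ q, (∃ l, IsWalk E l v c ∧ walkLen w l ≤ β) → q.idxOf b ≤ q.idxOf c

/-- `(v, vf)` is a maximal pair: `vf = dfirst(v,P₁,β)` and there is no `u` strictly
later than `v` on `P₂` with `u_f` defined and `u_f ≤_{P₁} vf`. -/
def MaximalPair {V : Type*} [DecidableEq V] (E : V → V → Prop) (w : V → V → ℝ)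
    (p₂ p₁ : List V) (β : ℝ) (v vf : V) : Prop :=
  v ∈ p₂ ∧ IsDFirst E w v p₁ β vf ∧
    ¬ ∃ u uf, u ∈ p₂ ∧ p₂.idxOf v < p₂.idxOf u ∧
      IsDFirst E w u p₁ β uf ∧ p₁.idxOf uf ≤ p₁.idxOf vf

/-! Since `P₂` has length zero, `b` reaches `b*` for free and hence reaches `b*_f` within `β`, so
`b_f` exists; the `P₂`-last vertex `u` with some `u_f ≤ b_f` forms a maximal pair, whence
`v* ≤ b_f`. For the walk, fix a maximal pair `(v, v*)`. If `b ≤ v`, walk along `P₂` to `v` and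
then to `v*`. Otherwise either `b_f = v*`, or `v* < b_f` and the crossing hypothesis makes the
`β`-walks `b → b_f` and `v → v*` meet; switching walks at a common vertex costs at most `2β`. -/

section Walks

variable {V : Type*} {E : V → V → Prop} {w : V → V → ℝ}

@[simp]
lemma walkLen_singleton (a : V) : walkLen w [a] = 0 := by simp [walkLen]

@[simp]
lemma walkLen_cons_cons (a b : V) (l : List V) :
    walkLen w (a :: b :: l) = w a b + walkLen w (b :: l) := by
  simp [walkLen]

lemma walkLen_nonneg (hw : ∀ x y, 0 ≤ w x y) (l : List V) : 0 ≤ walkLen w l :=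
  List.sum_nonneg fun _ hr => by
    obtain ⟨q, -, rfl⟩ := List.mem_map.1 hr
    exact hw _ _

lemma walkLen_append_cons (s t : List V) (x : V) :
    walkLen w (s ++ x :: t) = walkLen w (s ++ [x]) + walkLen w (x :: t) := by
  induction s with
  | nil => simp
  | cons a s ih => cases s <;> simp_all [add_assoc]

lemma isWalk_iff {l : List V} {u v : V} :
    IsWalk E l u v ↔ l ≠ [] ∧ l.head? = some u ∧ l.getLast? = some v ∧ l.IsChain E :=
  Iff.rfl

lemma isWalk_append_cons_iff {s t : List V} {u v x : V} :
    IsWalk E (s ++ x :: t) u v ↔ IsWalk E (s ++ [x]) u x ∧ IsWalk E (x :: t) x v := by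
  rw [isWalk_iff, isWalk_iff, isWalk_iff, List.isChain_split]
  simp [List.head?_append, List.getLast?_append, and_assoc, and_left_comm]

lemma IsWalk.exists_append {l₁ l₂ : List V} {u x v : V}
    (h₁ : IsWalk E l₁ u x) (h₂ : IsWalk E l₂ x v) :
    ∃ l, IsWalk E l u v ∧ walkLen w l = walkLen w l₁ + walkLen w l₂ := by
  obtain ⟨s, rfl⟩ := List.getLast?_eq_some_iff.1 h₁.2.2.1
  obtain ⟨t, rfl⟩ := List.head?_eq_some_iff.1 h₂.2.1
  exact ⟨s ++ x :: t, isWalk_append_cons_iff.2 ⟨h₁, h₂⟩, walkLen_append_cons s t x⟩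

lemma IsWalk.exists_split_of_mem {l : List V} {u v x : V} (h : IsWalk E l u v) (hx : x ∈ l) :
    ∃ l₁ l₂, IsWalk E l₁ u x ∧ IsWalk E l₂ x v ∧ walkLen w l₁ + walkLen w l₂ = walkLen w l := by
  obtain ⟨s, t, rfl⟩ := List.append_of_mem hx
  obtain ⟨h₁, h₂⟩ := isWalk_append_cons_iff.1 h
  exact ⟨_, _, h₁, h₂, (walkLen_append_cons s t x).symm⟩

lemma IsWalk.exists_switch_of_mem (hw : ∀ x y, 0 ≤ w x y) {l₁ l₂ : List V} {u y u' v x : V}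
    (h₁ : IsWalk E l₁ u y) (h₂ : IsWalk E l₂ u' v) (hx₁ : x ∈ l₁) (hx₂ : x ∈ l₂) :
    ∃ l, IsWalk E l u v ∧ walkLen w l ≤ walkLen w l₁ + walkLen w l₂ := by
  obtain ⟨a, a', ha, -, hlen₁⟩ := h₁.exists_split_of_mem (w := w) hx₁
  obtain ⟨b', b, -, hb, hlen₂⟩ := h₂.exists_split_of_mem (w := w) hx₂
  obtain ⟨l, hl, hlen⟩ := ha.exists_append (w := w) hb
  exact ⟨l, hl, by linarith [walkLen_nonneg hw a', walkLen_nonneg hw b']⟩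

lemma exists_walk_of_idxOf_le [DecidableEq V] (hw : ∀ x y, 0 ≤ w x y) {p : List V}
    (hp : p.IsChain E) {b c : V} (hb : b ∈ p) (hc : c ∈ p) (hbc : p.idxOf b ≤ p.idxOf c) :
    ∃ l, IsWalk E l b c ∧ walkLen w l ≤ walkLen w p := by
  have hi : p.idxOf b < p.length := List.idxOf_lt_length_iff.2 hb
  set t := p.drop (p.idxOf b + 1)
  have hdrop : b :: t = p.drop (p.idxOf b) := by
    have := List.getElem_cons_drop hi
    rwa [List.getElem_idxOf hi] at this
  have hsplit : p = p.take (p.idxOf b) ++ b :: t := by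
    rw [hdrop, List.take_append_drop]
  have hct : c ∈ b :: t := by
    have := List.idxOf_lt_length_iff.2 hc
    rw [hdrop, List.mem_drop_iff_getElem]
    exact ⟨p.idxOf c - p.idxOf b, by omega, by simp [Nat.add_sub_cancel' hbc]⟩
  have hwalk : IsWalk E (b :: t) b ((b :: t).getLast (List.cons_ne_nil b t)) :=
    ⟨List.cons_ne_nil b t, rfl, List.getLast?_eq_some_getLast _,
      (List.isChain_split.1 (hsplit ▸ hp)).2⟩
  obtain ⟨l₁, l₂, hl₁, -, hlen⟩ := hwalk.exists_split_of_mem (w := w) hct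
  have hlen_p := walkLen_append_cons (w := w) (p.take (p.idxOf b)) t b
  rw [← hsplit] at hlen_p
  exact ⟨l₁, hl₁, by linarith [walkLen_nonneg hw l₂, walkLen_nonneg hw (p.take (p.idxOf b) ++ [b])]⟩

end Walks

section DFirst

variable {V : Type*} [DecidableEq V] {E : V → V → Prop} {w : V → V → ℝ}

lemma exists_isDFirst {v : V} {q : List V} {β : ℝ}
    (h : ∃ c ∈ q, ∃ l, IsWalk E l v c ∧ walkLen w l ≤ β) : ∃ b, IsDFirst E w v q β b := by
  obtain ⟨b, ⟨hb, hreach⟩, hmin⟩ := Set.exists_min_image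
    {c | c ∈ q ∧ ∃ l, IsWalk E l v c ∧ walkLen w l ≤ β} q.idxOf
    (q.finite_toSet.subset fun _ hc => hc.1) (let ⟨c, hc, hreach⟩ := h; ⟨c, hc, hreach⟩)
  exact ⟨b, hb, hreach, fun c hc hreach => hmin c ⟨hc, hreach⟩⟩

lemma exists_maximalPair_le {p₂ p₁ : List V} {β : ℝ} {b bf : V}
    (hb : b ∈ p₂) (hbf : IsDFirst E w b p₁ β bf) :
    ∃ u uf, MaximalPair E w p₂ p₁ β u uf ∧ p₁.idxOf uf ≤ p₁.idxOf bf := by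
  obtain ⟨u, ⟨hu, uf, huf, hle⟩, hmax⟩ := Set.exists_max_image
    {u | u ∈ p₂ ∧ ∃ uf, IsDFirst E w u p₁ β uf ∧ p₁.idxOf uf ≤ p₁.idxOf bf} p₂.idxOf
    (p₂.finite_toSet.subset fun _ hu => hu.1) ⟨b, hb, bf, hbf, le_rfl⟩
  refine ⟨u, uf, ⟨hu, huf, ?_⟩, hle⟩
  rintro ⟨u', uf', hu', hlt, huf', hle'⟩
  exact (hmax u' ⟨hu', uf', huf', hle'.trans hle⟩).not_gt hlt

end DFirst

theorem stmt_7_general {V : Type*} [DecidableEq V] (E : V → V → Prop)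
    (w : V → V → ℝ) (hw : ∀ x y, 0 ≤ w x y)
    (p₂ p₁ : List V) (hp₂ch : p₂.Chain' E)
    (hp₂len : walkLen w p₂ = 0)
    (hcross : ∀ (lw lw' : List V) (b q b' q' : V),
      b ∈ p₂ → q ∈ p₁ → b' ∈ p₂ → q' ∈ p₁ →
      IsWalk E lw b q → IsWalk E lw' b' q' →
      p₂.idxOf b' < p₂.idxOf b → p₁.idxOf q' < p₁.idxOf q →
      ∃ x, x ∈ lw ∧ x ∈ lw')
    (β : ℝ)
    (bstar vstar : V)
    (hbstar₁ : ∃ vf, MaximalPair E w p₂ p₁ β bstar vf)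
    (hvstar₁ : ∃ v, MaximalPair E w p₂ p₁ β v vstar)
    (hvstar₂ : ∀ v vf, MaximalPair E w p₂ p₁ β v vf → p₁.idxOf vstar ≤ p₁.idxOf vf) :
    ∀ b ∈ p₂, p₂.idxOf b ≤ p₂.idxOf bstar →
      (∃ bf, IsDFirst E w b p₁ β bf ∧ p₁.idxOf vstar ≤ p₁.idxOf bf) ∧
      ∃ l, IsWalk E l b vstar ∧ walkLen w l ≤ 2 * β := by
  intro b hb hb_le
  obtain ⟨vf, hbstar, ⟨hvf, ⟨l₀, hl₀, hl₀_len⟩, -⟩, -⟩ := hbstar₁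
  obtain ⟨bf, hbf⟩ : ∃ bf, IsDFirst E w b p₁ β bf := by
    obtain ⟨s, hs, hs_len⟩ := exists_walk_of_idxOf_le hw hp₂ch hb hbstar hb_le
    obtain ⟨l, hl, hl_len⟩ := hs.exists_append (w := w) hl₀
    exact exists_isDFirst ⟨vf, hvf, l, hl, by linarith⟩
  obtain ⟨u, uf, hu, huf⟩ := exists_maximalPair_le hb hbf
  have hvstar_bf : p₁.idxOf vstar ≤ p₁.idxOf bf := (hvstar₂ u uf hu).trans huf
  refine ⟨⟨bf, hbf, hvstar_bf⟩, ?_⟩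
  obtain ⟨hbf_mem, ⟨lb, hlb, hlb_len⟩, -⟩ := hbf
  obtain ⟨v, hv, ⟨hvstar, ⟨lv, hlv, hlv_len⟩, -⟩, -⟩ := hvstar₁
  rcases le_or_gt (p₂.idxOf b) (p₂.idxOf v) with hbv | hvb
  · obtain ⟨s, hs, hs_len⟩ := exists_walk_of_idxOf_le hw hp₂ch hb hv hbv
    obtain ⟨l, hl, hl_len⟩ := hs.exists_append (w := w) hlv
    exact ⟨l, hl, by linarith [walkLen_nonneg hw lv]⟩
  rcases hvstar_bf.lt_or_eq with hlt | heq
  · obtain ⟨x, hx_b, hx_v⟩ := hcross lb lv b bf v vstar hb hbf_mem hv hvstar hlb hlv hvb hlt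
    obtain ⟨l, hl, hl_len⟩ := hlb.exists_switch_of_mem hw hlv hx_b hx_v
    exact ⟨l, hl, by linarith⟩
  · rw [(List.idxOf_inj hvstar).1 heq]
    exact ⟨lb, hlb, by linarith [walkLen_nonneg hw lb]⟩

/-- With `b*` the `≤_{P₂}`-greatest first coordinate of a maximal pair and
`v*` the `≤_{P₁}`-least second coordinate, every `b ≤_{P₂} b*` has `b_f` defined with
`v* ≤_{P₁} b_f`, and some walk from `b` to `v*` has length at most `2β`. -/
theorem stmt_7 {V : Type*} [Fintype V] [DecidableEq V] (E : V → V → Prop)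
    (w : V → V → ℝ) (hw : ∀ x y, 0 ≤ w x y)
    (p₂ p₁ : List V) (hp₂nd : p₂.Nodup) (hp₂ch : p₂.Chain' E)
    (hp₂len : walkLen w p₂ = 0) (hp₁nd : p₁.Nodup)
    (hdisj : ∀ x ∈ p₁, x ∉ p₂)
    (hnoout : ∀ x ∈ p₁, ∀ y, ¬ E x y)
    (hhead : ∀ x y, E x y → y ∈ p₂ → ∃ i, p₂[i]? = some x ∧ p₂[i+1]? = some y)
    (hcross : ∀ (lw lw' : List V) (b q b' q' : V),
      b ∈ p₂ → q ∈ p₁ → b' ∈ p₂ → q' ∈ p₁ →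
      IsWalk E lw b q → IsWalk E lw' b' q' →
      p₂.idxOf b' < p₂.idxOf b → p₁.idxOf q' < p₁.idxOf q →
      ∃ x, x ∈ lw ∧ x ∈ lw')
    (β : ℝ) (hβ : 0 < β)
    (bstar vstar : V)
    (hbstar₁ : ∃ vf, MaximalPair E w p₂ p₁ β bstar vf)
    (hbstar₂ : ∀ v vf, MaximalPair E w p₂ p₁ β v vf → p₂.idxOf v ≤ p₂.idxOf bstar)
    (hvstar₁ : ∃ v, MaximalPair E w p₂ p₁ β v vstar)
    (hvstar₂ : ∀ v vf, MaximalPair E w p₂ p₁ β v vf → p₁.idxOf vstar ≤ p₁.idxOf vf) :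
    ∀ b ∈ p₂, p₂.idxOf b ≤ p₂.idxOf bstar →
      (∃ bf, IsDFirst E w b p₁ β bf ∧ p₁.idxOf vstar ≤ p₁.idxOf bf) ∧
      ∃ l, IsWalk E l b vstar ∧ walkLen w l ≤ 2 * β :=
  stmt_7_general E w hw p₂ p₁ hp₂ch hp₂len hcross β bstar vstar hbstar₁ hvstar₁ hvstar₂
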